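/- arXiv:2410.20538 — 7 statements merged into one kernel-verified Lean document; each statement's English description precedes it below -/
import Mathlib

section
/- Let q and α be positive integers and set P = (q+2)·α. Then q^(q·α) · multinomial(P; q·α, α, α) · P² ≥ (q+2)^P, where multinomial(P; q·α, α, α) = P! / ((q·α)! · α! · α!). Equivalently, q^(q·α) · (P choose q·α, α, α) ≥ (q+2)^P / P². -/
open Finset Nat

private lemma mult3_spec (a b c : ℕ) :
    Nat.multinomial (Finset.univ : Finset (Fin 3)) ![a,b,c] * ((a)! * (b)! * (c)!) = (a+b+c)! := by
  have := Nat.multinomial_spec (Finset.univ : Finset (Fin 3)) ![a,b,c]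
  simp [Fin.prod_univ_three, Fin.sum_univ_three] at this
  linarith [this]

private lemma asc_prod (n k : ℕ) : (n+1).ascFactorial k = ∏ i ∈ Finset.range k, (n + 1 + i) := by
  induction k with
  | zero => simp
  | succ k ih => rw [Nat.ascFactorial_succ, Finset.prod_range_succ, ih]; ring

/-- recurrence for the multinomial -/
private lemma rec_eq (q a : ℕ) :
    Nat.multinomial (Finset.univ : Finset (Fin 3)) ![q*(a+1), a+1, a+1] *
      ((q*a+1).ascFactorial q * (a+1)^2) =
    Nat.multinomial (Finset.univ : Finset (Fin 3)) ![q*a, a, a] *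
      (((q+2)*a+1).ascFactorial (q+2)) := by
  set M1 := Nat.multinomial (Finset.univ : Finset (Fin 3)) ![q*(a+1), a+1, a+1]
  set M0 := Nat.multinomial (Finset.univ : Finset (Fin 3)) ![q*a, a, a]
  have hF : 0 < (q*a)! * ((a)! * (a)!) := by positivity
  apply Nat.eq_of_mul_eq_mul_right hF
  have h1 : (q*a)! * (q*a+1).ascFactorial q = (q*a+q)! := Nat.factorial_mul_ascFactorial _ _
  have h2 : ((q+2)*a)! * (((q+2)*a+1).ascFactorial (q+2)) = ((q+2)*a + (q+2))! :=
    Nat.factorial_mul_ascFactorial _ _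
  have h3 : M1 * ((q*(a+1))! * (a+1)! * (a+1)!) = (q*(a+1)+(a+1)+(a+1))! := mult3_spec _ _ _
  have h4 : M0 * ((q*a)! * (a)! * (a)!) = (q*a+a+a)! := mult3_spec _ _ _
  have e1 : q*(a+1) = q*a+q := by ring
  have e2 : q*(a+1)+(a+1)+(a+1) = (q+2)*a+(q+2) := by ring
  have e3 : q*a+a+a = (q+2)*a := by ring
  calc M1 * ((q*a+1).ascFactorial q * (a+1)^2) * ((q*a)! * ((a)! * (a)!))
      = M1 * (((q*a)! * (q*a+1).ascFactorial q) * ((a+1) * (a)!) * ((a+1) * (a)!)) := by ring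
    _ = M1 * ((q*(a+1))! * (a+1)! * (a+1)!) := by
        rw [h1, e1, Nat.factorial_succ]
        try ring
    _ = ((q+2)*a+(q+2))! := by rw [h3, e2]
    _ = ((q+2)*a)! * (((q+2)*a+1).ascFactorial (q+2)) := h2.symm
    _ = M0 * ((q*a)! * (a)! * (a)!) * (((q+2)*a+1).ascFactorial (q+2)) := by rw [h4, e3]
    _ = M0 * (((q+2)*a+1).ascFactorial (q+2)) * ((q*a)! * ((a)! * (a)!)) := by ring

/-- `(q+2)^q ≤ 8 q^q` via `e^2 < 8` -/
private lemma pow_le_eight (q : ℕ) (hq : 0 < q) : (q+2)^q ≤ 8 * q^q := by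
  have hq' : (0:ℝ) < (q:ℝ) := by exact_mod_cast hq
  have key : ((q:ℝ)+2)^q ≤ 8 * (q:ℝ)^q := by
    have h1 : (q:ℝ) + 2 = q * (1 + 2/q) := by field_simp
    have h2 : (1 : ℝ) + 2/q ≤ Real.exp (2/q) := by
      have := Real.add_one_le_exp (2/(q:ℝ)); linarith
    have h3 : ((q:ℝ)+2)^q ≤ (q:ℝ)^q * Real.exp (2/q) ^ q := by
      rw [h1, mul_pow]
      apply mul_le_mul_of_nonneg_left _ (by positivity)
      exact pow_le_pow_left₀ (by positivity) h2 q
    have h4 : Real.exp (2/(q:ℝ)) ^ q = Real.exp 2 := by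
      rw [← Real.exp_nat_mul]
      congr 1
      field_simp
    have h5 : Real.exp 2 ≤ 8 := by
      have h := Real.exp_one_lt_d9
      have : Real.exp 2 = Real.exp 1 * Real.exp 1 := by
        rw [← Real.exp_add]; norm_num
      nlinarith [Real.exp_pos 1]
    calc ((q:ℝ)+2)^q ≤ (q:ℝ)^q * Real.exp (2/q) ^ q := h3
      _ = (q:ℝ)^q * Real.exp 2 := by rw [h4]
      _ ≤ (q:ℝ)^q * 8 := by nlinarith [pow_pos hq' q]
      _ = 8 * (q:ℝ)^q := by ring
  exact_mod_cast key

private lemma base_pow (q : ℕ) (hq : 0 < q) : (q+2)^q ≤ q^q * ((q+1)*(q+2)) := by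
  rcases Nat.lt_or_ge q 2 with h | h
  · interval_cases q <;> norm_num
  · calc (q+2)^q ≤ 8 * q^q := pow_le_eight q hq
      _ ≤ ((q+1)*(q+2)) * q^q := by
          have : 8 ≤ (q+1)*(q+2) := by nlinarith
          exact Nat.mul_le_mul_right _ this
      _ = q^q * ((q+1)*(q+2)) := by ring

/-- key inequality for the induction step -/
private lemma key_ineq (q a : ℕ) (hq : 0 < q) :
    ((q+2)*a)^2 * (q+2)^(q+2) * ((q*a+1).ascFactorial q * (a+1)^2) ≤
    q^q * (((q+2)*a+1).ascFactorial (q+2)) * ((q+2)*(a+1))^2 := by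
  set P := (q+2)*a with hP
  -- termwise comparison
  have main : (q+2)^q * (q*a+1).ascFactorial q ≤ q^q * ∏ i ∈ Finset.range q, (P+3+i) := by
    rw [asc_prod]
    calc (q+2)^q * ∏ i ∈ Finset.range q, (q*a+1+i)
        = ∏ i ∈ Finset.range q, ((q+2) * (q*a+1+i)) := by
          rw [Finset.prod_mul_distrib, Finset.prod_const, Finset.card_range]
      _ ≤ ∏ i ∈ Finset.range q, (q * (P+3+i)) := by
          apply Finset.prod_le_prod' 
          intro i hi
          have hi' : i + 1 ≤ q := Finset.mem_range.mp hi
          have : (q+2)*(q*a+1+i) ≤ q*((q+2)*a+3+i) := by nlinarith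
          simpa [hP] using this
      _ = q^q * ∏ i ∈ Finset.range q, (P+3+i) := by
          rw [Finset.prod_mul_distrib, Finset.prod_const, Finset.card_range]
  -- split the big ascFactorial
  have split : (P+1).ascFactorial (q+2) = (∏ i ∈ Finset.range q, (P+3+i)) * ((P+1)*(P+2)) := by
    rw [asc_prod]
    rw [Finset.prod_range_succ', Finset.prod_range_succ']
    have : ∀ i, P + 1 + (i + 1 + 1) = P + 3 + i := by intro i; ring
    simp only [this]
    ring
  have sq : P^2 ≤ (P+1)*(P+2) := by nlinarith
  calc P^2 * (q+2)^(q+2) * ((q*a+1).ascFactorial q * (a+1)^2)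
      = ((q+2)^q * (q*a+1).ascFactorial q) * P^2 * ((q+2)*(a+1))^2 := by ring
    _ ≤ (q^q * ∏ i ∈ Finset.range q, (P+3+i)) * ((P+1)*(P+2)) * ((q+2)*(a+1))^2 := by
        apply Nat.mul_le_mul_right
        exact Nat.mul_le_mul main sq
    _ = q^q * ((∏ i ∈ Finset.range q, (P+3+i)) * ((P+1)*(P+2))) * ((q+2)*(a+1))^2 := by ring
    _ = q^q * ((P+1).ascFactorial (q+2)) * ((q+2)*(a+1))^2 := by rw [split]

/-- For positive integers `q`, `α` and `P = (q+2)·α`, we have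
`q^(q·α) · multinomial(P; q·α, α, α) · P² ≥ (q+2)^P`. -/
theorem pow_mul_multinomial_ge (q α P : ℕ) (hq : 0 < q) (hα : 0 < α)
    (hP : P = (q + 2) * α) :
    (q + 2) ^ P ≤ q ^ (q * α) * Nat.multinomial (Finset.univ : Finset (Fin 3)) ![q * α, α, α] * P ^ 2 := by
  subst hP
  induction α, hα using Nat.le_induction with
  | base =>
    -- (q+2)^(q+2) ≤ q^q * M 1 * (q+2)^2
    have hM : Nat.multinomial (Finset.univ : Finset (Fin 3)) ![q*1, 1, 1] * ((q)! * 1 * 1)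
        = (q+2)! := by
      have := mult3_spec (q*1) 1 1
      simpa [Nat.factorial_one, Nat.mul_one] using this
    have hfq : 0 < (q)! := q.factorial_pos
    apply Nat.le_of_mul_le_mul_right _ hfq
    have expand : (q+2)! = (q+2)*(q+1)*(q)! := by
      rw [Nat.factorial_succ, Nat.factorial_succ]; ring
    calc (q+2)^((q+2)*1) * (q)! = (q+2)^q * ((q+2)^2 * (q)!) := by
          rw [mul_one, pow_add]; ring
      _ ≤ (q^q * ((q+1)*(q+2))) * ((q+2)^2 * (q)!) := by
          exact Nat.mul_le_mul_right _ (base_pow q hq)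
      _ = q^q * ((q+2)*(q+1)*(q)!) * (q+2)^2 := by ring
      _ = q^q * (Nat.multinomial (Finset.univ : Finset (Fin 3)) ![q*1, 1, 1] * ((q)! * 1 * 1)) * (q+2)^2 := by
          rw [hM, expand]
      _ = q^(q*1) * Nat.multinomial (Finset.univ : Finset (Fin 3)) ![q*1, 1, 1] * ((q+2)*1)^2 * (q)! := by
          ring
  | succ a ha ih =>
    set M1 := Nat.multinomial (Finset.univ : Finset (Fin 3)) ![q*(a+1), a+1, a+1] with hM1
    set M0 := Nat.multinomial (Finset.univ : Finset (Fin 3)) ![q*a, a, a] with hM0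
    have hD : 0 < (q*a+1).ascFactorial q * (a+1)^2 := by
      have := Nat.pos_of_ne_zero (n := (q*a+1).ascFactorial q) ?_
      · positivity
      · intro h
        have : 0 < (q*a+1).ascFactorial q := by
          calc 0 < (q*a+1)^q := by positivity
            _ ≤ (q*a+1).ascFactorial q := Nat.pow_succ_le_ascFactorial _ _ -- name check
        omega
    set D := (q*a+1).ascFactorial q * (a+1)^2 with hDdef
    apply Nat.le_of_mul_le_mul_right _ hD
    have hrec : M1 * D = M0 * (((q+2)*a+1).ascFactorial (q+2)) := rec_eq q a
    calc (q+2)^((q+2)*(a+1)) * D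
        = (q+2)^((q+2)*a) * (q+2)^(q+2) * D := by
          rw [← pow_add]; ring_nf
      _ ≤ (q^(q*a) * M0 * ((q+2)*a)^2) * (q+2)^(q+2) * D := by
          exact Nat.mul_le_mul_right _ (Nat.mul_le_mul_right _ ih)
      _ = q^(q*a) * M0 * (((q+2)*a)^2 * (q+2)^(q+2) * D) := by ring
      _ ≤ q^(q*a) * M0 * (q^q * (((q+2)*a+1).ascFactorial (q+2)) * ((q+2)*(a+1))^2) := by
          exact Nat.mul_le_mul_left _ (key_ineq q a hq)
      _ = q^(q*a) * q^q * (M0 * (((q+2)*a+1).ascFactorial (q+2))) * ((q+2)*(a+1))^2 := by ring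
      _ = q^(q*(a+1)) * (M1 * D) * ((q+2)*(a+1))^2 := by
          rw [hrec, ← pow_add]; ring_nf
      _ = q^(q*(a+1)) * M1 * ((q+2)*(a+1))^2 * D := by ring
end

section
/- For every real ε > 0 there exist a real constant a > 0 and a natural number N₀ such that for all integers n ≥ N₀ and all integers t with (t : ℝ) > n^(2+ε), the following holds: for every finite set S of vectors in (ZMod 2)^(n²) (i.e., every Finset of functions Fin (n²) → ZMod 2) with |S| ≥ t, there exists a nonempty subset S' ⊆ S with (|S'| : ℝ) ≤ a · n² / log n such that the sum over all x ∈ S' of x equals the zero vector. -/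
/-!
Pigeonhole on the sums of `k`-subsets: if `C(|S|, k) > 2^{n²}`, two distinct `k`-subsets of `S`
have the same sum, and their symmetric difference is a nonempty zero-sum set of size at most `2k`.
For `k = ⌈n² / (ε log n)⌉` and `t > n^{2+ε}` one has `C(t, k) ≥ (t/k)^k > (n^ε)^k ≥ e^{n²} > 2^{n²}`.
-/

open Finset Real
open scoped symmDiff

theorem Nat.pow_le_choose_mul_pow {t k : ℕ} (hkt : k ≤ t) : t ^ k ≤ t.choose k * k ^ k := by
  refine Nat.le_of_mul_le_mul_right ?_ k.factorial_pos
  calc t ^ k * k.factorial = ∏ i ∈ range k, t * (k - i) := by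
        rw [prod_mul_distrib, prod_const, card_range, ← Nat.descFactorial_self,
          Nat.descFactorial_eq_prod_range]
    _ ≤ ∏ i ∈ range k, (t - i) * k := prod_le_prod' fun i hi => by
        have hik : i ≤ k := (mem_range.1 hi).le
        zify [hik, hik.trans hkt]
        nlinarith
    _ = t.choose k * k ^ k * k.factorial := by
        rw [prod_mul_distrib, prod_const, card_range, ← Nat.descFactorial_eq_prod_range,
          Nat.descFactorial_eq_factorial_mul_choose]
        ring

theorem exists_zero_sum_subset_of_card_lt_choose {G : Type*} [AddCommGroup G]
    [Module (ZMod 2) G] [Fintype G] [DecidableEq G] {S : Finset G} {k : ℕ}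
    (h : Fintype.card G < S.card.choose k) :
    ∃ S' ⊆ S, S'.Nonempty ∧ S'.card ≤ 2 * k ∧ ∑ x ∈ S', x = 0 := by
  obtain ⟨A, hA, B, hB, hAB, hsum⟩ := exists_ne_map_eq_of_card_lt_of_maps_to
    (s := powersetCard k S) (t := univ) (by rwa [card_powersetCard, Finset.card_univ])
    fun A _ => mem_univ (∑ x ∈ A, x)
  rw [mem_powersetCard] at hA hB
  refine ⟨A ∆ B, symmDiff_subset_union.trans (union_subset hA.1 hB.1),
    nonempty_iff_ne_empty.2 (symmDiff_eq_bot.not.2 hAB), ?_, ?_⟩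
  · calc (A ∆ B).card ≤ (A ∪ B).card := card_le_card symmDiff_subset_union
      _ ≤ A.card + B.card := card_union_le A B
      _ = 2 * k := by omega
  · rw [symmDiff_def, sup_eq_union, sum_union disjoint_sdiff_sdiff,
      sum_sdiff_eq_sum_sdiff_iff.2 hsum, ← two_nsmul]
    exact ZModModule.char_nsmul_eq_zero 2 _

theorem two_pow_lt_choose_of_pow_le {m k t : ℕ} {b : ℝ} (hb : 1 ≤ b) (hk : 0 < k)
    (hkt : k * b < t) (hm : (2 : ℝ) ^ m ≤ b ^ k) : 2 ^ m < t.choose k := by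
  have hk' : (0 : ℝ) < k := by exact_mod_cast hk
  have hkt' : k ≤ t := by exact_mod_cast (le_mul_of_one_le_right hk'.le hb).trans hkt.le
  have hchoose : (t : ℝ) ^ k ≤ t.choose k * k ^ k := by exact_mod_cast Nat.pow_le_choose_mul_pow hkt'
  have hbt : b < t / k := by rw [lt_div_iff₀ hk']; linarith
  exact_mod_cast calc (2 : ℝ) ^ m ≤ b ^ k := hm
    _ < (t / k) ^ k := pow_lt_pow_left₀ hbt (by positivity) hk.ne'
    _ = t ^ k / k ^ k := div_pow _ _ _
    _ ≤ t.choose k := div_le_of_le_mul₀ (by positivity) (by positivity) hchoose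

theorem two_pow_le_pow_of_le_mul_log {m k : ℕ} {b : ℝ} (hb : 0 < b)
    (h : (m : ℝ) ≤ k * log b) : (2 : ℝ) ^ m ≤ b ^ k :=
  calc (2 : ℝ) ^ m ≤ exp 1 ^ m := by
        gcongr; linarith [add_one_le_exp (1 : ℝ)]
    _ = exp m := by rw [← exp_nat_mul, mul_one]
    _ ≤ exp (k * log b) := exp_le_exp.2 h
    _ = b ^ k := by rw [exp_nat_mul, exp_log hb]

theorem exists_two_pow_lt_choose {ε : ℝ} (hε : 0 < ε) {n t : ℕ} (hn : 2 ≤ n)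
    (hL : 2 / ε ≤ log n) (ht : (n : ℝ) ^ (2 + ε) < t) :
    ∃ k : ℕ, 2 ^ (n ^ 2) < t.choose k ∧ (2 * k : ℝ) ≤ (2 / ε + 2) * n ^ 2 / log n := by
  have hn0 : (0 : ℝ) < n := by positivity
  have hn2 : (2 : ℝ) ≤ n := by exact_mod_cast hn
  have hLpos : 0 < log n := (by positivity : (0 : ℝ) < 2 / ε).trans_le hL
  have hεL : 2 ≤ ε * log n := by rwa [div_le_iff₀' hε] at hL
  have hLM : log n ≤ (n : ℝ) ^ 2 := by nlinarith [log_le_sub_one_of_pos hn0]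
  set x := (n : ℝ) ^ 2 / (ε * log n) with hx
  have hx0 : 0 < x := by positivity
  have hxM : x ≤ (n : ℝ) ^ 2 / 2 := div_le_div_of_nonneg_left (by positivity) two_pos hεL
  refine ⟨⌈x⌉₊, two_pow_lt_choose_of_pow_le (b := n ^ ε) ?_ (Nat.ceil_pos.2 hx0) ?_ ?_, ?_⟩
  · exact one_le_rpow (by linarith) hε.le
  · have hkM : (⌈x⌉₊ : ℝ) ≤ n ^ 2 := by nlinarith [Nat.ceil_lt_add_one hx0.le]
    calc (⌈x⌉₊ : ℝ) * n ^ ε ≤ n ^ 2 * n ^ ε := by gcongr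
      _ = n ^ (2 + ε) := by rw [rpow_add hn0, rpow_two]
      _ < t := ht
  · refine two_pow_le_pow_of_le_mul_log (by positivity) ?_
    calc ((n ^ 2 : ℕ) : ℝ) = x * (ε * log n) := by rw [hx]; push_cast; field_simp
      _ ≤ ⌈x⌉₊ * log (n ^ ε) := by rw [log_rpow hn0]; gcongr; exact Nat.le_ceil x
  · have hMdiv : 1 ≤ (n : ℝ) ^ 2 / log n := by rwa [le_div_iff₀ hLpos, one_mul]
    calc (2 * ⌈x⌉₊ : ℝ) ≤ 2 * (x + 1) := by gcongr; exact (Nat.ceil_lt_add_one hx0.le).le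
      _ ≤ 2 / ε * (n ^ 2 / log n) + 2 * (n ^ 2 / log n) := by
        rw [hx]; field_simp; nlinarith
      _ = (2 / ε + 2) * n ^ 2 / log n := by ring

/-- For every `ε > 0` there are `a > 0` and `N₀` such that for every `n ≥ N₀` and `t > n^(2+ε)`,
every set of at least `t` vectors in `(ZMod 2)^(n²)` contains a nonempty subset of size at most
`a·n²/log n` summing to zero. -/
theorem exists_small_zero_sum_subset (ε : ℝ) (hε : 0 < ε) :
    ∃ (a : ℝ) (N₀ : ℕ), 0 < a ∧
      ∀ n : ℕ, N₀ ≤ n → ∀ t : ℕ, (t : ℝ) > (n : ℝ) ^ ((2 : ℝ) + ε) →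
        ∀ S : Finset (Fin (n ^ 2) → ZMod 2), t ≤ S.card →
          ∃ S' ⊆ S, S'.Nonempty ∧ (S'.card : ℝ) ≤ a * (n : ℝ) ^ 2 / Real.log n ∧
            ∑ x ∈ S', x = 0 := by
  refine ⟨2 / ε + 2, max 2 ⌈exp (2 / ε)⌉₊, by positivity, fun n hn t ht S hS => ?_⟩
  have hn2 : 2 ≤ n := le_of_max_le_left hn
  have hL : 2 / ε ≤ log n := by
    rw [le_log_iff_exp_le (by positivity)]
    exact (Nat.le_ceil _).trans (by exact_mod_cast le_of_max_le_right hn)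
  obtain ⟨k, hchoose, hk⟩ := exists_two_pow_lt_choose hε hn2 hL ht
  have hcard : Fintype.card (Fin (n ^ 2) → ZMod 2) < S.card.choose k := by
    simpa [Fintype.card_fun, ZMod.card] using hchoose.trans_le (Nat.choose_le_choose k hS)
  obtain ⟨S', hS'S, hS', hS'k, hsum⟩ := exists_zero_sum_subset_of_card_lt_choose hcard
  exact ⟨S', hS'S, hS', (by exact_mod_cast hS'k : (S'.card : ℝ) ≤ 2 * k).trans hk, hsum⟩
end

section
/- Let m and k be positive integers and let S be a finite set of vectors in (ZMod 2)^m (a Finset of functions Fin m → ZMod 2). If the binomial coefficient (|S| choose k) is strictly greater than 2^m, then there exists a nonempty subset S' ⊆ S with |S'| ≤ 2k such that the sum over all x ∈ S' of x equals the zero vector. -/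
/-- If `S` is a finite set of vectors in `(ZMod 2)^m` with `(|S| choose k) > 2^m`, then some
nonempty subset `S' ⊆ S` with `|S'| ≤ 2k` sums to zero. -/
theorem exists_zero_sum_subset_of_choose_gt (m k : ℕ) (hm : 0 < m) (hk : 0 < k)
    (S : Finset (Fin m → ZMod 2)) (h : 2 ^ m < S.card.choose k) :
    ∃ S' ⊆ S, S'.Nonempty ∧ S'.card ≤ 2 * k ∧ ∑ x ∈ S', x = 0 := by
  classical
  have hcard : Fintype.card (Fin m → ZMod 2) = 2 ^ m := by
    simp [Fintype.card_fun]
  -- pigeonhole on size-k subsets mapping to their sum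
  have hlt : (Finset.univ : Finset (Fin m → ZMod 2)).card <
      (S.powersetCard k).card := by
    rw [Finset.card_univ, hcard, Finset.card_powersetCard]
    exact h
  obtain ⟨A, hA, B, hB, hAB, hsum⟩ :=
    Finset.exists_ne_map_eq_of_card_lt_of_maps_to hlt
      (fun A _ => Finset.mem_univ (∑ x ∈ A, x))
  rw [Finset.mem_powersetCard] at hA hB
  refine ⟨(A \ B) ∪ (B \ A), ?_, ?_, ?_, ?_⟩
  · intro x hx
    rcases Finset.mem_union.1 hx with hx | hx
    · exact hA.1 (Finset.mem_sdiff.1 hx).1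
    · exact hB.1 (Finset.mem_sdiff.1 hx).1
  · rw [Finset.nonempty_iff_ne_empty]
    intro hempty
    apply hAB
    have h1 : A \ B = ∅ := Finset.union_eq_empty.1 hempty |>.1
    have h2 : B \ A = ∅ := Finset.union_eq_empty.1 hempty |>.2
    exact Finset.Subset.antisymm (Finset.sdiff_eq_empty_iff_subset.1 h1)
      (Finset.sdiff_eq_empty_iff_subset.1 h2)
  · calc ((A \ B) ∪ (B \ A)).card ≤ (A \ B).card + (B \ A).card :=
          Finset.card_union_le _ _
      _ ≤ A.card + B.card := by
          gcongr <;> exact Finset.sdiff_subset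
      _ = 2 * k := by rw [hA.2, hB.2]; ring
  · have hdisj : Disjoint (A \ B) (B \ A) := disjoint_sdiff_sdiff
    rw [Finset.sum_union hdisj]
    have e1 : ∑ x ∈ A, x = ∑ x ∈ A \ B, x + ∑ x ∈ A ∩ B, x := by
      rw [← Finset.sum_sdiff (Finset.inter_subset_left : A ∩ B ⊆ A),
        Finset.sdiff_inter_self_left]
    have e2 : ∑ x ∈ B, x = ∑ x ∈ B \ A, x + ∑ x ∈ A ∩ B, x := by
      rw [← Finset.sum_sdiff (Finset.inter_subset_right : A ∩ B ⊆ B),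
        Finset.sdiff_inter_self_right]
    have key : ∑ x ∈ A \ B, x + ∑ x ∈ B \ A, x
        = ∑ x ∈ A, x + ∑ x ∈ B, x + 2 • (-∑ x ∈ A ∩ B, x) := by
      rw [e1, e2]; abel
    rw [key, hsum]
    have h2 : (2 : ℕ) • (-∑ x ∈ A ∩ B, x) = 0 := by
      rw [two_nsmul]
      ext i
      simp only [Pi.add_apply, Pi.neg_apply, Pi.zero_apply]
      exact CharTwo.add_self_eq_zero _
    rw [h2, add_zero]
    -- ∑A + ∑A = 0 in char 2
    ext i
    simp only [Pi.add_apply, Pi.zero_apply]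
    exact CharTwo.add_self_eq_zero _
end

section
/- Let I, J, K be finite index sets, let d, k be positive integers, let p be a prime number with d·k < p, and let ω ∈ ℂ be a primitive p-th root of unity. Let T, A₁, …, A_d : I × J × K → ℂ be tensors. Then the sum over i = 1, …, p of the k-th Kronecker power of the tensor T + Σ_{h=1}^{d} ω^{i·h} · A_h equals p · T^{⊗k}; that is, for all x : Fin k → I, y : Fin k → J, z : Fin k → K, Σ_{i=1}^{p} ∏_{l : Fin k} ( T(x l, y l, z l) + Σ_{h=1}^{d} ω^{i·h} · A_h(x l, y l, z l) ) = p · ∏_{l : Fin k} T(x l, y l, z l). -/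
open Finset

lemma root_sum_aux {p : ℕ} (hp : 0 < p) {ω : ℂ} (hω : IsPrimitiveRoot ω p) (n : ℕ) :
    ∑ i ∈ Finset.Icc 1 p, ω ^ (i * n) = if p ∣ n then (p : ℂ) else 0 := by
  have hζp : (ω ^ n) ^ p = 1 := by
    rw [← pow_mul, mul_comm, pow_mul, hω.pow_eq_one, one_pow]
  split_ifs with h
  · have h1 : ω ^ n = 1 := by
      obtain ⟨c, rfl⟩ := h
      rw [pow_mul, hω.pow_eq_one, one_pow]
    have : ∀ i ∈ Finset.Icc 1 p, ω ^ (i * n) = 1 := by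
      intro i _
      rw [mul_comm, pow_mul, h1, one_pow]
    rw [Finset.sum_congr rfl this, Finset.sum_const, Nat.card_Icc]
    simp
  · have hζ1 : ω ^ n ≠ 1 := fun h1 => h ((hω.pow_eq_one_iff_dvd n).mp h1)
    have heq : ∑ i ∈ Finset.Icc 1 p, ω ^ (i * n) = ∑ i ∈ Finset.Ico 1 (p+1), (ω ^ n) ^ i := by
      rw [← Finset.Ico_add_one_right_eq_Icc]
      exact Finset.sum_congr rfl fun i _ => by rw [← pow_mul, mul_comm]
    rw [heq, geom_sum_Ico hζ1 (by omega), pow_succ, hζp, one_mul, pow_one, sub_self, zero_div]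

/-- Polynomial-interpolation identity: for a prime `p > d·k` and a primitive `p`-th root of
unity `ω`, the sum over `i = 1, …, p` of the `k`-th Kronecker power of
`T + Σ_{h=1}^{d} ω^{i·h} · A_h` equals `p · T^{⊗k}`. -/
theorem sum_kronPow_root_of_unity {I J K : Type*} [Fintype I] [Fintype J] [Fintype K]
    (d k p : ℕ) (hd : 0 < d) (hk : 0 < k) (hp : p.Prime) (hdk : d * k < p)
    (ω : ℂ) (hω : IsPrimitiveRoot ω p)
    (T : I × J × K → ℂ) (A : Fin d → I × J × K → ℂ)
    (x : Fin k → I) (y : Fin k → J) (z : Fin k → K) :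
    ∑ i ∈ Finset.Icc 1 p, ∏ l : Fin k,
        (T (x l, y l, z l) + ∑ h : Fin d, ω ^ (i * (h.1 + 1)) * A h (x l, y l, z l)) =
      (p : ℂ) * ∏ l : Fin k, T (x l, y l, z l) := by
  classical
  have hp0 : 0 < p := hp.pos
  set c : Fin (d+1) → Fin k → ℂ := fun j l =>
    Fin.cases (T (x l, y l, z l)) (fun h => A h (x l, y l, z l)) j with hc
  have hfac : ∀ i : ℕ, ∀ l : Fin k,
      T (x l, y l, z l) + ∑ h : Fin d, ω ^ (i * (h.1 + 1)) * A h (x l, y l, z l)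
      = ∑ j : Fin (d+1), ω ^ (i * j.1) * c j l := by
    intro i l
    rw [Fin.sum_univ_succ]
    simp [hc]
  simp only [hfac]
  simp only [Finset.prod_univ_sum]
  rw [Finset.sum_comm]
  have hterm : ∀ f : Fin k → Fin (d+1), ∀ i : ℕ,
      ∏ l, ω ^ (i * (f l).1) * c (f l) l
      = ω ^ (i * ∑ l, (f l).1) * ∏ l, c (f l) l := by
    intro f i
    rw [Finset.prod_mul_distrib, Finset.prod_pow_eq_pow_sum, Finset.mul_sum]
  have hkey : ∀ f : Fin k → Fin (d+1),
      ∑ i ∈ Finset.Icc 1 p, ∏ l, ω ^ (i * (f l).1) * c (f l) l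
      = (if (∑ l, (f l).1) = 0 then (p : ℂ) else 0) * ∏ l, c (f l) l := by
    intro f
    simp only [hterm]
    rw [← Finset.sum_mul, root_sum_aux hp0 hω]
    have hle : (∑ l, (f l).1) ≤ d * k := by
      calc (∑ l, (f l).1) ≤ ∑ _l : Fin k, d := Finset.sum_le_sum fun l _ => by omega
        _ = d * k := by simp [mul_comm]
    have : p ∣ (∑ l, (f l).1) ↔ (∑ l, (f l).1) = 0 := by
      constructor
      · intro hdvd
        rcases Nat.eq_zero_or_pos (∑ l, (f l).1) with h0 | h0
        · exact h0
        · exact absurd (Nat.le_of_dvd h0 hdvd) (by omega)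
      · intro h0; simp [h0]
    simp [this]
  rw [Finset.sum_congr rfl (fun f _ => hkey f)]
  rw [Finset.sum_eq_single_of_mem (fun _ : Fin k => (0 : Fin (d+1)))]
  · simp [hc]
  · simp
  · intro f _ hne
    have : ¬ (∑ l, (f l).1) = 0 := by
      intro h0
      apply hne
      funext l
      have : (f l).1 = 0 := by
        have := Finset.sum_eq_zero_iff.mp h0 l (Finset.mem_univ l)
        exact this
      exact Fin.ext this
    simp [this]
end

section
/- Let I, J, K be finite index sets, let d and r be positive integers, and let T, A₁, …, A_d : I × J × K → ℂ be tensors such that for every nonzero ε ∈ ℂ the tensor T + Σ_{h=1}^{d} ε^h · A_h has rank at most r. Then for every positive integer k there exist a positive integer ℓ ≤ 2·d·k and tensors T₁, …, T_ℓ : I × J × K → ℂ, each of rank at most r, such that T^{⊗k} = Σ_{i=1}^{ℓ} T_i^{⊗k}. -/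
open Polynomial


/-- The rank of a tensor `T : I × J × K → F`: the least `t` admitting a decomposition of `T`
into `t` rank-one terms. -/
noncomputable def tensorRank {I J K F : Type*} [Field F] (T : I × J × K → F) : ℕ :=
  sInf {t : ℕ | ∃ (α : Fin t → I → F) (β : Fin t → J → F) (γ : Fin t → K → F),
    ∀ v : I × J × K, T v = ∑ s : Fin t, α s v.1 * β s v.2.1 * γ s v.2.2}

/-- The `k`-th Kronecker power of a tensor `T : I × J × K → F`. -/
def kronPow {I J K F : Type*} [Field F] (k : ℕ) (T : I × J × K → F) :
    (Fin k → I) × (Fin k → J) × (Fin k → K) → F :=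
  fun xyz => ∏ l : Fin k, T (xyz.1 l, xyz.2.1 l, xyz.2.2 l)

lemma tensorDecompSet_nonempty {I J K F : Type*} [Fintype I] [Fintype J] [Fintype K] [Field F]
    (S : I × J × K → F) :
    {t : ℕ | ∃ (α : Fin t → I → F) (β : Fin t → J → F) (γ : Fin t → K → F),
      ∀ v : I × J × K, S v = ∑ s : Fin t, α s v.1 * β s v.2.1 * γ s v.2.2}.Nonempty := by
  classical
  refine ⟨Fintype.card (I × J × K), ?_⟩
  set e := (Fintype.equivFin (I × J × K)).symm with he
  refine ⟨fun s i => if (e s).1 = i then S (e s) else 0,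
          fun s j => if (e s).2.1 = j then 1 else 0,
          fun s k => if (e s).2.2 = k then 1 else 0, ?_⟩
  intro v
  have h1 : ∀ w : I × J × K,
      (if w.1 = v.1 then S w else 0) * (if w.2.1 = v.2.1 then (1:F) else 0) *
        (if w.2.2 = v.2.2 then (1:F) else 0) = if w = v then S v else 0 := by
    intro w
    by_cases h : w = v
    · subst h; simp
    · rw [if_neg h]
      have hne : ¬(w.1 = v.1 ∧ w.2.1 = v.2.1 ∧ w.2.2 = v.2.2) := by
        simpa [Prod.ext_iff, and_assoc] using h
      by_cases a : w.1 = v.1 <;> by_cases b : w.2.1 = v.2.1 <;>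
        by_cases c : w.2.2 = v.2.2 <;> simp_all
  calc S v = ∑ w : I × J × K, if w = v then S v else 0 := by
        rw [Finset.sum_ite_eq' Finset.univ v (fun _ => S v)]; simp
    _ = ∑ w : I × J × K, (if w.1 = v.1 then S w else 0) * (if w.2.1 = v.2.1 then (1:F) else 0) *
        (if w.2.2 = v.2.2 then (1:F) else 0) := (Finset.sum_congr rfl fun w _ => (h1 w).symm)
    _ = ∑ s, (if (e s).1 = v.1 then S (e s) else 0) * (if (e s).2.1 = v.2.1 then (1:F) else 0) *
        (if (e s).2.2 = v.2.2 then (1:F) else 0) :=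
      (Equiv.sum_comp e fun w => (if w.1 = v.1 then S w else 0) *
        (if w.2.1 = v.2.1 then (1:F) else 0) * (if w.2.2 = v.2.2 then (1:F) else 0)).symm

lemma tensorRank_smul_le {I J K F : Type*} [Fintype I] [Fintype J] [Fintype K] [Field F]
    (c : F) (S : I × J × K → F) :
    tensorRank (fun v => c * S v) ≤ tensorRank S := by
  have hne := tensorDecompSet_nonempty S
  have hmem := Nat.sInf_mem hne
  obtain ⟨α, β, γ, hd⟩ := hmem
  apply Nat.sInf_le
  refine ⟨fun s i => c * α s i, β, γ, fun v => ?_⟩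
  show c * S v = _
  rw [hd v, Finset.mul_sum]
  exact Finset.sum_congr rfl fun s _ => by ring


/-- If for every nonzero `ε` the tensor `T + Σ_{h=1}^{d} ε^h · A_h` has rank at most `r`, then
for every `k` the power `T^{⊗k}` decomposes as a sum of at most `2·d·k` Kronecker powers of
tensors of rank at most `r`. -/
theorem kronPow_eq_sum_of_border_rank {I J K : Type*} [Fintype I] [Fintype J] [Fintype K]
    (d r : ℕ) (hd : 0 < d) (hr : 0 < r)
    (T : I × J × K → ℂ) (A : Fin d → I × J × K → ℂ)
    (hborder : ∀ ε : ℂ, ε ≠ 0 →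
      tensorRank (fun v => T v + ∑ h : Fin d, ε ^ (h.1 + 1) * A h v) ≤ r)
    (k : ℕ) (hk : 0 < k) :
    ∃ ℓ : ℕ, 0 < ℓ ∧ ℓ ≤ 2 * d * k ∧
      ∃ Ts : Fin ℓ → I × J × K → ℂ,
        (∀ i, tensorRank (Ts i) ≤ r) ∧
        ∀ xyz, kronPow k T xyz = ∑ i : Fin ℓ, kronPow k (Ts i) xyz := by
    classical
  set N := d * k + 1 with hN
  have hdk : 1 ≤ d * k := Nat.one_le_iff_ne_zero.mpr (by positivity)
  have h2dk : 2 * d * k = d * k + d * k := by ring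
  refine ⟨N, Nat.succ_pos _, by omega, ?_⟩
  -- interpolation nodes
  set pt : Fin N → ℂ := fun i => ((i.1 + 1 : ℕ) : ℂ) with hpt
  have hptne : ∀ i, pt i ≠ 0 := fun i => Nat.cast_ne_zero.mpr (Nat.succ_ne_zero _)
  have hinj : Set.InjOn pt (Finset.univ : Finset (Fin N)) := by
    intro i _ j _ h
    have : (i.1 + 1 : ℕ) = (j.1 + 1 : ℕ) := Nat.cast_injective h
    exact Fin.ext (by omega)
  set c : Fin N → ℂ := fun i => (Lagrange.basis Finset.univ pt i).eval 0 with hc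
  choose δ hδ using fun i => IsAlgClosed.exists_pow_nat_eq (c i) hk
  refine ⟨fun i w => δ i * (T w + ∑ h : Fin d, (pt i) ^ (h.1 + 1) * A h w), ?_, ?_⟩
  · intro i
    exact le_trans (tensorRank_smul_le _ _) (hborder (pt i) (hptne i))
  · intro xyz
    set P : ℂ[X] := ∏ l : Fin k, (C (T (xyz.1 l, xyz.2.1 l, xyz.2.2 l)) +
      ∑ h : Fin d, C (A h (xyz.1 l, xyz.2.1 l, xyz.2.2 l)) * X ^ (h.1 + 1)) with hP
    have hev : ∀ ε : ℂ, P.eval ε = ∏ l : Fin k, (T (xyz.1 l, xyz.2.1 l, xyz.2.2 l) +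
        ∑ h : Fin d, ε ^ (h.1 + 1) * A h (xyz.1 l, xyz.2.1 l, xyz.2.2 l)) := by
      intro ε
      rw [hP, eval_prod]
      refine Finset.prod_congr rfl fun l _ => ?_
      rw [eval_add, eval_C, eval_finset_sum]
      refine congrArg _ (Finset.sum_congr rfl fun h _ => ?_)
      rw [eval_mul, eval_C, eval_pow, eval_X, mul_comm]
    have hdeg : P.degree < ((Finset.univ : Finset (Fin N)).card : WithBot ℕ) := by
      have h1 : P.natDegree ≤ d * k := by
        refine le_trans (Polynomial.natDegree_prod_le _ _) ?_
        have h2 : ∀ l : Fin k, (C (T (xyz.1 l, xyz.2.1 l, xyz.2.2 l)) +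
            ∑ h : Fin d, C (A h (xyz.1 l, xyz.2.1 l, xyz.2.2 l)) * X ^ (h.1 + 1)).natDegree
            ≤ d := by
          intro l
          refine le_trans (Polynomial.natDegree_add_le _ _) ?_
          simp only [Polynomial.natDegree_C, max_le_iff]
          refine ⟨Nat.zero_le _, Polynomial.natDegree_sum_le_of_forall_le _ _ fun h _ => ?_⟩
          exact le_trans (Polynomial.natDegree_C_mul_le _ _)
            (le_trans (Polynomial.natDegree_X_pow_le _) h.2)
        calc ∑ l : Fin k, (C (T (xyz.1 l, xyz.2.1 l, xyz.2.2 l)) +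
              ∑ h : Fin d, C (A h (xyz.1 l, xyz.2.1 l, xyz.2.2 l)) * X ^ (h.1 + 1)).natDegree
            ≤ ∑ _l : Fin k, d := Finset.sum_le_sum fun l _ => h2 l
          _ = d * k := by simp [mul_comm]
      refine lt_of_le_of_lt P.degree_le_natDegree ?_
      simp only [Finset.card_univ, Fintype.card_fin]
      exact_mod_cast Nat.lt_succ_of_le h1
    have key := Lagrange.eq_interpolate hinj hdeg
    have h0 : P.eval 0 = ∑ i : Fin N, P.eval (pt i) * c i := by
      conv_lhs => rw [key]
      simp [Lagrange.interpolate_apply, eval_finset_sum, hc]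
    have lhs : kronPow k T xyz = P.eval 0 := by
      rw [hev 0]
      unfold kronPow
      refine Finset.prod_congr rfl fun l _ => ?_
      simp
    rw [lhs, h0]
    refine Finset.sum_congr rfl fun i _ => ?_
    unfold kronPow
    simp only []
    rw [Finset.prod_mul_distrib, Finset.prod_const, Finset.card_univ, Fintype.card_fin,
      hδ i, hev (pt i), mul_comm]
end

section
/- Let I, J, K be finite index sets, let d and r be positive integers, and let T, A₁, …, A_d : I × J × K → ℂ be tensors such that for every nonzero ε ∈ ℂ the tensor T + Σ_{h=1}^{d} ε^h · A_h has rank at most r. Then for every positive integer k, the rank of T^{⊗k} is at most 2·d·k·r^k. -/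
open Finset Polynomial

lemma tensorRank_le_card {I J K F : Type*} [Field F] (T : I × J × K → F)
    {S : Type*} [Fintype S] (α : S → I → F) (β : S → J → F) (γ : S → K → F)
    (h : ∀ v, T v = ∑ s : S, α s v.1 * β s v.2.1 * γ s v.2.2) :
    tensorRank T ≤ Fintype.card S := by
  apply Nat.sInf_le
  let e := Fintype.equivFin S
  refine ⟨fun s => α (e.symm s), fun s => β (e.symm s), fun s => γ (e.symm s), fun v => ?_⟩
  rw [h v]
  exact (Equiv.sum_comp e.symm fun s => α s v.1 * β s v.2.1 * γ s v.2.2).symm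

lemma tensorRank_set_nonempty {I J K F : Type*} [Fintype I] [Fintype J] [Fintype K] [Field F]
    (T : I × J × K → F) :
    {t : ℕ | ∃ (α : Fin t → I → F) (β : Fin t → J → F) (γ : Fin t → K → F),
      ∀ v : I × J × K, T v = ∑ s : Fin t, α s v.1 * β s v.2.1 * γ s v.2.2}.Nonempty := by
  classical
  let e := Fintype.equivFin (I × J × K)
  refine ⟨Fintype.card (I × J × K),
    fun s i => if i = (e.symm s).1 then T (e.symm s) else 0,
    fun s j => if j = (e.symm s).2.1 then 1 else 0,
    fun s kk => if kk = (e.symm s).2.2 then 1 else 0, fun v => ?_⟩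
  rw [Fintype.sum_eq_single (e v)]
  · simp
  · intro x hx
    have hxv : e.symm x ≠ v := fun h => hx (by rw [← h, Equiv.apply_symm_apply])
    by_cases h1 : v.1 = (e.symm x).1 <;> by_cases h2 : v.2.1 = (e.symm x).2.1 <;>
      by_cases h3 : v.2.2 = (e.symm x).2.2 <;> simp_all [Prod.ext_iff]

/-- extract a decomposition of size `tensorRank T`. -/
lemma exists_decomp {I J K F : Type*} [Fintype I] [Fintype J] [Fintype K] [Field F]
    (T : I × J × K → F) :
    ∃ (α : Fin (tensorRank T) → I → F) (β : Fin (tensorRank T) → J → F)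
      (γ : Fin (tensorRank T) → K → F),
      ∀ v : I × J × K, T v = ∑ s, α s v.1 * β s v.2.1 * γ s v.2.2 :=
  Nat.sInf_mem (tensorRank_set_nonempty T)

lemma kronPow_decomp {I J K F : Type*} [Field F] {k t : ℕ} (T : I × J × K → F)
    (α : Fin t → I → F) (β : Fin t → J → F) (γ : Fin t → K → F)
    (h : ∀ v, T v = ∑ s : Fin t, α s v.1 * β s v.2.1 * γ s v.2.2)
    (w : (Fin k → I) × (Fin k → J) × (Fin k → K)) :
    kronPow k T w = ∑ s : Fin k → Fin t,
      (∏ l, α (s l) (w.1 l)) * (∏ l, β (s l) (w.2.1 l)) * (∏ l, γ (s l) (w.2.2 l)) := by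
  unfold kronPow
  simp_rw [h, Fintype.prod_sum fun l s => α s (w.1 l) * β s (w.2.1 l) * γ s (w.2.2 l)]
  refine Fintype.sum_congr _ _ fun s => ?_
  rw [← Finset.prod_mul_distrib, ← Finset.prod_mul_distrib]

/-- If for every nonzero `ε` the tensor `T + Σ_{h=1}^{d} ε^h · A_h` has rank at most `r`, then
for every `k` the rank of `T^{⊗k}` is at most `2·d·k·r^k`. -/
theorem tensorRank_kronPow_le_of_border_rank {I J K : Type*} [Fintype I] [Fintype J] [Fintype K]
    (d r : ℕ) (hd : 0 < d) (hr : 0 < r)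
    (T : I × J × K → ℂ) (A : Fin d → I × J × K → ℂ)
    (hborder : ∀ ε : ℂ, ε ≠ 0 →
      tensorRank (fun v => T v + ∑ h : Fin d, ε ^ (h.1 + 1) * A h v) ≤ r)
    (k : ℕ) (hk : 0 < k) :
    tensorRank (kronPow k T) ≤ 2 * d * k * r ^ k := by
  classical
  set N := d * k + 1 with hN
  -- nodes
  set ε : Fin N → ℂ := fun i => (i : ℕ) + 1 with hε
  have hεinj : Set.InjOn ε (univ : Finset (Fin N)) := by
    intro i _ j _ hij
    have : ((i : ℕ) : ℂ) = ((j : ℕ) : ℂ) := by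
      simpa [hε] using hij
    exact Fin.ext (Nat.cast_injective this)
  have hεne : ∀ i, ε i ≠ 0 := by
    intro i
    have : ((i : ℕ) + 1 : ℂ) = ((i + 1 : ℕ) : ℂ) := by push_cast; ring
    simp only [hε, this]
    exact_mod_cast Nat.succ_ne_zero i
  -- the perturbed tensors
  set Tb : ℂ → (I × J × K → ℂ) :=
    fun e v => T v + ∑ h : Fin d, e ^ (h.1 + 1) * A h v with hTb
  -- polynomials
  set P : I × J × K → ℂ[X] :=
    fun u => C (T u) + ∑ h : Fin d, X ^ (h.1 + 1) * C (A h u) with hP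
  have hPeval : ∀ u e, (P u).eval e = Tb e u := by
    intro u e
    simp only [hP, hTb, eval_add, eval_C, eval_finset_sum, eval_mul, eval_pow, eval_X]
  have hPdeg : ∀ u, (P u).natDegree ≤ d := by
    intro u
    refine (natDegree_add_le _ _).trans (max_le (by simp) ?_)
    refine (natDegree_sum_le _ _).trans ?_
    rw [Finset.fold_max_le]
    refine ⟨Nat.zero_le d, fun hh _ => ?_⟩
    refine natDegree_mul_le.trans ?_
    simp only [natDegree_C, natDegree_X_pow, add_zero]
    exact hh.isLt
  set Q : (Fin k → I) × (Fin k → J) × (Fin k → K) → ℂ[X] :=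
    fun w => ∏ l : Fin k, P (w.1 l, w.2.1 l, w.2.2 l) with hQ
  have hQeval : ∀ w e, (Q w).eval e = kronPow k (Tb e) w := by
    intro w e; simp [hQ, kronPow, eval_prod, hPeval]
  have hQ0 : ∀ w, (Q w).eval 0 = kronPow k T w := by
    intro w
    simp only [hQ, kronPow, eval_prod, hP, eval_add, eval_C, eval_finset_sum, eval_mul,
      eval_pow, eval_X]
    simp [pow_succ]
  have hQdeg : ∀ w, (Q w).degree < (N : ℕ) := by
    intro w
    refine lt_of_le_of_lt (degree_le_natDegree) ?_
    have : (Q w).natDegree ≤ d * k := by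
      refine (natDegree_prod_le _ _).trans ?_
      calc ∑ l : Fin k, (P (w.1 l, w.2.1 l, w.2.2 l)).natDegree
          ≤ ∑ _l : Fin k, d := Finset.sum_le_sum fun l _ => hPdeg _
        _ = d * k := by simp [mul_comm]
    exact_mod_cast Nat.lt_succ_of_le this
  -- interpolation coefficients
  set c : Fin N → ℂ := fun i => (Lagrange.basis univ ε i).eval 0 with hc
  have interp : ∀ w, kronPow k T w = ∑ i : Fin N, c i * kronPow k (Tb (ε i)) w := by
    intro w
    have hcard : (Q w).degree < (#(univ : Finset (Fin N)) : ℕ) := by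
      simpa using hQdeg w
    have := Lagrange.eq_interpolate hεinj hcard
    have h0 := congrArg (eval 0) this
    rw [Lagrange.interpolate_apply] at h0
    rw [← hQ0 w, h0, eval_finset_sum]
    refine Fintype.sum_congr _ _ fun i => ?_
    rw [eval_mul, eval_C, hQeval, hc]
    ring
  -- decompositions of each perturbed tensor
  set t : Fin N → ℕ := fun i => tensorRank (Tb (ε i)) with ht
  have htr : ∀ i, t i ≤ r := fun i => hborder (ε i) (hεne i)
  choose α β γ hdec using fun i => exists_decomp (Tb (ε i))
  -- final decomposition
  have key : ∀ w, kronPow k T w = ∑ p : Σ i : Fin N, (Fin k → Fin (t i)),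
      (c p.1 * ∏ l, α p.1 (p.2 l) (w.1 l)) * (∏ l, β p.1 (p.2 l) (w.2.1 l)) *
        (∏ l, γ p.1 (p.2 l) (w.2.2 l)) := by
    intro w
    rw [interp w, ← Finset.univ_sigma_univ, Finset.sum_sigma]
    refine Fintype.sum_congr _ _ fun i => ?_
    rw [kronPow_decomp (Tb (ε i)) (α i) (β i) (γ i) (hdec i) w, Finset.mul_sum]
    refine Fintype.sum_congr _ _ fun s => ?_
    ring
  have hle := tensorRank_le_card (kronPow k T)
    (fun p : Σ i : Fin N, (Fin k → Fin (t i)) => fun x => c p.1 * ∏ l, α p.1 (p.2 l) (x l))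
    (fun p => fun y => ∏ l, β p.1 (p.2 l) (y l))
    (fun p => fun z => ∏ l, γ p.1 (p.2 l) (z l)) key
  refine hle.trans ?_
  have hcard : Fintype.card (Σ i : Fin N, (Fin k → Fin (t i))) = ∑ i : Fin N, (t i) ^ k := by
    simp [Fintype.card_sigma, Fintype.card_fun]
  rw [hcard]
  calc ∑ i : Fin N, (t i) ^ k ≤ ∑ _i : Fin N, r ^ k :=
        Finset.sum_le_sum fun i _ => Nat.pow_le_pow_left (htr i) k
    _ = N * r ^ k := by simp
    _ ≤ (2 * d * k) * r ^ k := by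
        have h1 : 1 ≤ d * k := Nat.one_le_iff_ne_zero.mpr (by positivity)
        have h2 : N ≤ 2 * d * k := by
          have : N ≤ 2 * (d * k) := by omega
          calc N ≤ 2 * (d * k) := this
            _ = 2 * d * k := by ring
        exact Nat.mul_le_mul_right _ h2
end

section
/- Let q be a positive integer and work over the ring of Laurent polynomials ℂ[λ, λ⁻¹]. Index x-, y- and z-variables by {0, 1, …, q+1}. For 1 ≤ i ≤ q define u_i, v_i, w_i ∈ (ℂ[λ,λ⁻¹])^{q+2} by u_i = e₀ + λ·e_i (and similarly v_i, w_i); define u' = e₀ + λ²·(e₁ + ⋯ + e_q) (similarly v', w'); and define u'' = e₀ + λ³·e_{q+1} (similarly v'', w''), where e_j is the j-th standard basis vector. Consider the tensor D on {0,…,q+1}³ with entries in ℂ[λ,λ⁻¹] given by D(a,b,c) = Σ_{i=1}^{q} λ⁻² · u_i(a)·v_i(b)·w_i(c) − λ⁻³ · u'(a)·v'(b)·w'(c) + (λ⁻³ − q·λ⁻²) · u''(a)·v''(b)·w''(c). Then for every (a,b,c), the Laurent polynomial D(a,b,c) − CW_q(a,b,c) has vanishing coefficients in all degrees ≤ 0;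 i.e., D equals CW_q plus terms of strictly positive degree in λ. In particular CW_q is a sum of q+2 rank-one tensors up to O(λ) error, so the border rank of CW_q is at most q+2. -/
open LaurentPolynomial

/-- The Coppersmith–Winograd tensor `CW_q` on `{0,…,q+1}³`: equal to `1` exactly on the triples
`(0,i,i)`, `(i,0,i)`, `(i,i,0)` for `1 ≤ i ≤ q` and on `(0,0,q+1)`, `(0,q+1,0)`, `(q+1,0,0)`,
and `0` otherwise. -/
def CWtensor (q : ℕ) : Fin (q + 2) × Fin (q + 2) × Fin (q + 2) → ℂ :=
  fun v =>
    if ((v.1 : ℕ) = 0 ∧ v.2.1 = v.2.2 ∧ 1 ≤ (v.2.1 : ℕ) ∧ (v.2.1 : ℕ) ≤ q) ∨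
       ((v.2.1 : ℕ) = 0 ∧ v.1 = v.2.2 ∧ 1 ≤ (v.1 : ℕ) ∧ (v.1 : ℕ) ≤ q) ∨
       ((v.2.2 : ℕ) = 0 ∧ v.1 = v.2.1 ∧ 1 ≤ (v.1 : ℕ) ∧ (v.1 : ℕ) ≤ q) ∨
       ((v.1 : ℕ) = 0 ∧ (v.2.1 : ℕ) = 0 ∧ (v.2.2 : ℕ) = q + 1) ∨
       ((v.1 : ℕ) = 0 ∧ (v.2.1 : ℕ) = q + 1 ∧ (v.2.2 : ℕ) = 0) ∨
       ((v.1 : ℕ) = q + 1 ∧ (v.2.1 : ℕ) = 0 ∧ (v.2.2 : ℕ) = 0)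
    then 1 else 0

/-- The vector `u_i = e₀ + λ·e_i` (for `1 ≤ i ≤ q`, indexed by `i : Fin q`). -/
noncomputable def cwVec (q : ℕ) (i : Fin q) : Fin (q + 2) → LaurentPolynomial ℂ :=
  fun a => (if (a : ℕ) = 0 then 1 else 0) + T 1 * (if (a : ℕ) = (i : ℕ) + 1 then 1 else 0)

/-- The vector `u' = e₀ + λ²·(e₁ + ⋯ + e_q)`. -/
noncomputable def cwVec' (q : ℕ) : Fin (q + 2) → LaurentPolynomial ℂ :=
  fun a => (if (a : ℕ) = 0 then 1 else 0) +
    T 2 * (if 1 ≤ (a : ℕ) ∧ (a : ℕ) ≤ q then 1 else 0)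

/-- The vector `u'' = e₀ + λ³·e_{q+1}`. -/
noncomputable def cwVec'' (q : ℕ) : Fin (q + 2) → LaurentPolynomial ℂ :=
  fun a => (if (a : ℕ) = 0 then 1 else 0) + T 3 * (if (a : ℕ) = q + 1 then 1 else 0)

/-- The Coppersmith–Winograd border-rank-`(q+2)` approximation tensor
`D(a,b,c) = Σ_{i=1}^{q} λ⁻²·u_i(a)·u_i(b)·u_i(c) − λ⁻³·u'(a)·u'(b)·u'(c)
  + (λ⁻³ − q·λ⁻²)·u''(a)·u''(b)·u''(c)`. -/
noncomputable def cwApprox (q : ℕ) :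
    Fin (q + 2) × Fin (q + 2) × Fin (q + 2) → LaurentPolynomial ℂ :=
  fun v =>
    (∑ i : Fin q, T (-2) * cwVec q i v.1 * cwVec q i v.2.1 * cwVec q i v.2.2)
      - T (-3) * cwVec' q v.1 * cwVec' q v.2.1 * cwVec' q v.2.2
      + (T (-3) - (q : LaurentPolynomial ℂ) * T (-2)) *
          cwVec'' q v.1 * cwVec'' q v.2.1 * cwVec'' q v.2.2

/-!
A term `λ^m (e₀ + λ^k f)^{⊗3}` contributes `e₀^{⊗3}` in degree `m`, the symmetrization of
`f⊗e₀⊗e₀` in degree `m + k`, that of `f⊗f⊗e₀` in degree `m + 2k` and `f^{⊗3}` in degree `m + 3k`,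
so only the degrees `-3, …, 0` matter. The `e₀^{⊗3}` terms cancel in degree `-3` (`u'` against
`u''`) and in degree `-2` (the `q` vectors `u_i` against `q λ⁻² u''`). In degree `-1` the
first-order terms of the `u_i` add up to that of `u' = e₀ + λ² (e₁ + ⋯ + e_q)` and cancel it. In
degree `0` the second-order terms of the `u_i` and the first-order term of `u''` are exactly the
summands `e_i⊗e_i⊗e₀, …, e₀⊗e₀⊗e_{q+1}` of `CW_q`.
-/

open Finset

namespace LaurentPolynomial

variable {R : Type*} [CommSemiring R]

theorem C_mul_T_apply (r : R) (m n : ℤ) : (C r * T m).coeff n = if m = n then r else 0 := by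
  rw [← single_eq_C_mul_T, AddMonoidAlgebra.coeff_single, Finsupp.single_apply]

theorem T_mul_cube_apply (m k n : ℤ) (x₀ x₁ y₀ y₁ z₀ z₁ : R) :
    (T m * (C x₀ + T k * C x₁) * (C y₀ + T k * C y₁) * (C z₀ + T k * C z₁)).coeff n =
      (if m = n then x₀ * y₀ * z₀ else 0)
      + (if m + k = n then x₁ * y₀ * z₀ + x₀ * y₁ * z₀ + x₀ * y₀ * z₁ else 0)
      + (if m + 2 * k = n then x₁ * y₁ * z₀ + x₁ * y₀ * z₁ + x₀ * y₁ * z₁ else 0)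
      + (if m + 3 * k = n then x₁ * y₁ * z₁ else 0) := by
  have hexpand : T m * (C x₀ + T k * C x₁) * (C y₀ + T k * C y₁) * (C z₀ + T k * C z₁) =
      C (x₀ * y₀ * z₀) * T m + C (x₁ * y₀ * z₀ + x₀ * y₁ * z₀ + x₀ * y₀ * z₁) * T (m + k)
      + C (x₁ * y₁ * z₀ + x₁ * y₀ * z₁ + x₀ * y₁ * z₁) * T (m + 2 * k)
      + C (x₁ * y₁ * z₁) * T (m + 3 * k) := by
    rw [show m + 2 * k = m + k + k by ring, show m + 3 * k = m + k + k + k by ring]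
    simp only [T_add, map_add, map_mul]
    ring
  simp only [hexpand, AddMonoidAlgebra.coeff_add, Finsupp.add_apply, C_mul_T_apply]

end LaurentPolynomial

theorem Fin.eq_zero_or_eq_succ_castSucc_or_eq_last {q : ℕ} (a : Fin (q + 2)) :
    a = 0 ∨ (∃ i : Fin q, a = i.castSucc.succ) ∨ a = Fin.last (q + 1) := by
  induction a using Fin.cases with
  | zero => exact .inl rfl
  | succ j =>
    induction j using Fin.lastCases with
    | last => exact .inr (.inr rfl)
    | cast i => exact .inr (.inl ⟨i, rfl⟩)

local notation "𝐞" j => (Pi.single j (1 : ℂ) : Fin _ → ℂ)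

theorem CWtensor_eq_sum (q : ℕ) (a b c : Fin (q + 2)) :
    CWtensor q (a, b, c) =
      ∑ i : Fin q, ((𝐞 i.castSucc.succ) a * (𝐞 i.castSucc.succ) b * (𝐞 0) c
        + (𝐞 i.castSucc.succ) a * (𝐞 0) b * (𝐞 i.castSucc.succ) c
        + (𝐞 0) a * (𝐞 i.castSucc.succ) b * (𝐞 i.castSucc.succ) c)
      + ((𝐞 Fin.last _) a * (𝐞 0) b * (𝐞 0) c + (𝐞 0) a * (𝐞 Fin.last _) b * (𝐞 0) c
        + (𝐞 0) a * (𝐞 0) b * (𝐞 Fin.last _) c) := by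
  rcases a.eq_zero_or_eq_succ_castSucc_or_eq_last with rfl | ⟨i, rfl⟩ | rfl <;>
  rcases b.eq_zero_or_eq_succ_castSucc_or_eq_last with rfl | ⟨j, rfl⟩ | rfl <;>
  rcases c.eq_zero_or_eq_succ_castSucc_or_eq_last with rfl | ⟨k, rfl⟩ | rfl <;>
  simp [CWtensor, Pi.single_apply] <;> omega

theorem cwVec_apply (q : ℕ) (i : Fin q) (a : Fin (q + 2)) :
    cwVec q i a = C ((𝐞 0) a) + T 1 * C ((𝐞 i.castSucc.succ) a) := by
  rcases a.eq_zero_or_eq_succ_castSucc_or_eq_last with rfl | ⟨j, rfl⟩ | rfl <;>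
  simp [cwVec, Pi.single_apply, Fin.ext_iff]

theorem cwVec'_apply (q : ℕ) (a : Fin (q + 2)) :
    cwVec' q a = C ((𝐞 0) a) + T 2 * C (∑ i : Fin q, (𝐞 i.castSucc.succ) a) := by
  rcases a.eq_zero_or_eq_succ_castSucc_or_eq_last with rfl | ⟨i, rfl⟩ | rfl <;>
  simp [cwVec', Pi.single_apply]

theorem cwVec''_apply (q : ℕ) (a : Fin (q + 2)) :
    cwVec'' q a = C ((𝐞 0) a) + T 3 * C ((𝐞 Fin.last _) a) := by
  rcases a.eq_zero_or_eq_succ_castSucc_or_eq_last with rfl | ⟨i, rfl⟩ | rfl <;>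
  simp [cwVec'', (Fin.is_lt _).ne]

theorem cwApprox_sub_CWtensor_coeff_nonpos_eq_zero_general (q : ℕ)
    (a b c : Fin (q + 2)) (n : ℤ) (hn : n ≤ 0) :
    (cwApprox q (a, b, c) - LaurentPolynomial.C (CWtensor q (a, b, c))).coeff n = 0 := by
  have hdistrib : ∀ x y z : ℂ[T;T⁻¹], (T (-3) - (q : ℂ[T;T⁻¹]) * T (-2)) * x * y * z =
      T (-3) * x * y * z - (q : ℂ) • (T (-2) * x * y * z) := by
    intro x y z
    rw [smul_eq_C_mul, map_natCast]
    ring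
  simp only [cwApprox, hdistrib, cwVec_apply, cwVec'_apply, cwVec''_apply,
    AddMonoidAlgebra.coeff_sub, AddMonoidAlgebra.coeff_add, AddMonoidAlgebra.coeff_sum,
    AddMonoidAlgebra.coeff_smul, Finsupp.sub_apply, Finsupp.add_apply, Finsupp.smul_apply,
    Finsupp.finsetSum_apply, smul_eq_mul, C_apply, T_mul_cube_apply]
  obtain rfl | rfl | rfl | rfl | hlt : n = 0 ∨ n = -1 ∨ n = -2 ∨ n = -3 ∨ n < -3 := by omega
  · norm_num
    rw [CWtensor_eq_sum]
    ring
  · norm_num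
    simp only [sum_add_distrib, sum_mul, mul_sum]
    ring
  · norm_num
  · norm_num
  · have hne : ∀ m : ℤ, -3 ≤ m → m ≠ n := fun m hm => by omega
    norm_num [hne, show n ≠ 0 by omega]

/-- The approximation `D` equals `CW_q` plus terms of strictly positive degree in `λ`:
every coefficient of `D(a,b,c) − CW_q(a,b,c)` in degree `≤ 0` vanishes. In particular
`CW_q` is a sum of `q+2` rank-one tensors up to `O(λ)` error, so `R̲(CW_q) ≤ q+2`. -/
theorem cwApprox_sub_CWtensor_coeff_nonpos_eq_zero (q : ℕ) (hq : 0 < q)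
    (a b c : Fin (q + 2)) (n : ℤ) (hn : n ≤ 0) :
    (cwApprox q (a, b, c) - LaurentPolynomial.C (CWtensor q (a, b, c))).coeff n = 0 :=
  cwApprox_sub_CWtensor_coeff_nonpos_eq_zero_general q a b c n hn
end
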